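/- arXiv:2507.11248 — 2 statements merged into one kernel-verified Lean document; each statement's English description precedes it below -/
import Mathlib

section
/- Let δ₀ > 0, b₀ > 0, I₀ > 0 and set Ω_b = {z ∈ ℂ : |z| < δ₀, Im z < I₀ b}. Suppose f₀ is analytic on B_{δ₀}(0) with f₀(z) = z^{k₀} g₀(z) for some k₀ ∈ ℕ and g₀ analytic and nonvanishing on B_{δ₀}(0); suppose f_b is analytic on Ω_b for 0 < b ≤ b₀ with sup_{0<b≤b₀} ‖f_b‖_{C^{k₀+1}(Ω_b)} < ∞ and ‖f_b − f₀‖_{C^{k₀+1}(Ω_b)} → 0 as b → 0; suppose there are zeros z₁(b), …, z_{k₀}(b) of f_b with z_j(0) = 0, |z_j(b)| ≤ I₀b/3; and, if k₀ ≥ 2, assume the z_j(b) are pairwise distinct for b > 0 and there is C* > 1 with C*^{−1} b ≤ |z_j(b) − z_{j′}(b)| ≤ C* b for all pairs (j,j′) ≠ (1,2) with j < j′. Then there exist δ₁ ∈ (0,δ₀] and b₁ ∈ (0,b₀] such that for every 0 < b ≤ b₁ the function g_b(z) = f_b(z) / ∏_{j=1}^{k₀}(z − z_j(b)) is analytic and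 nonvanishing on {|z| < δ₁, Im z < I₀ b}. -/
/-!
Take for `g_b` the iterated divided difference `f_b[z₁(b), …, z_{k₀}(b), ·]`, obtained by applying
`dslope` once at each zero; since the zeros are distinct, it factors `f_b` exactly. On a convex
domain a divided difference is an average of a derivative,
`(dslope f a)^{(k)}(w) = ∫₀¹ t^k f^{(k+1)}(a + t(w - a)) dt`,
so by induction `‖f^{(k)} - A‖ ≤ M` forces `‖f[p₁, …, p_k, ·] - A/k!‖ ≤ M/k!`. Near `0` and for
small `b`, `f_b^{(k₀)}` is within `‖A‖/2` of `A = f₀^{(k₀)}(0) = k₀! g₀(0) ≠ 0`, hence `g_b` is within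
`‖g₀(0)‖/2` of `g₀(0)` and cannot vanish. Only convexity of the region enters, not its size.
-/

open Set Metric Filter Topology
open scoped Nat

section IteratedDeriv

variable {𝕜 : Type*} [NontriviallyNormedField 𝕜]

theorem iteratedDeriv_succ_sub_mul {F : 𝕜 → 𝕜} {a ζ : 𝕜} {n : ℕ}
    (hF : ContDiffAt 𝕜 (n + 1) F ζ) :
    iteratedDeriv (n + 1) (fun w => (w - a) * F w) ζ
      = (ζ - a) * iteratedDeriv (n + 1) F ζ + (n + 1) * iteratedDeriv n F ζ := by
  have hlin : ∀ i, iteratedDeriv (i + 2) (fun w : 𝕜 => w - a) ζ = 0 := fun i => by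
    simp [iteratedDeriv_succ']
  rw [iteratedDeriv_fun_mul (by fun_prop) hF, Finset.sum_range_succ', Finset.sum_range_succ']
  simp only [hlin, mul_zero, Nat.reduceSubDiff, zero_mul, Finset.sum_const_zero, zero_add,
    Nat.choose_one_right, Nat.cast_add, Nat.cast_one, iteratedDeriv_one, differentiableAt_fun_id,
    differentiableAt_const, deriv_fun_sub, deriv_id'', deriv_const', sub_zero, mul_one,
    add_tsub_cancel_right, Nat.choose_zero_right, iteratedDeriv_zero, one_mul, tsub_zero]
  ring

theorem iteratedDeriv_pow_mul_zero {g : 𝕜 → 𝕜} {k : ℕ} (hg : ContDiffAt 𝕜 k g 0) :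
    iteratedDeriv k (fun w => w ^ k * g w) 0 = k ! * g 0 := by
  rw [iteratedDeriv_fun_mul (by fun_prop) hg, Finset.sum_eq_single k]
  · simp [Nat.descFactorial_self]
  · intro i hi hik
    simp only [Finset.mem_range] at hi
    simp only [iteratedDeriv_pow, mul_eq_zero, pow_eq_zero_iff', ne_eq, Nat.sub_eq_zero_iff_le,
      not_le, true_and]
    omega
  · simp

end IteratedDeriv

theorem DifferentiableOn.iteratedDeriv {E : Type*} [NormedAddCommGroup E] [NormedSpace ℂ E]
    [CompleteSpace E] {f : ℂ → E} {U : Set ℂ} (hf : DifferentiableOn ℂ f U) (hU : IsOpen U)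
    (n : ℕ) : DifferentiableOn ℂ (iteratedDeriv n f) U := by
  rw [iteratedDeriv_eq_iterate]
  exact ((hf.analyticOnNhd hU).iterated_deriv n).differentiableOn

theorem iteratedDeriv_ne_zero_of_eqOn_pow_mul {f g : ℂ → ℂ} {U : Set ℂ} (hU : IsOpen U)
    (h0 : 0 ∈ U) (hg : DifferentiableOn ℂ g U) (hg0 : g 0 ≠ 0) {k : ℕ}
    (hfg : ∀ w ∈ U, f w = w ^ k * g w) : iteratedDeriv k f 0 ≠ 0 := by
  rw [(eventuallyEq_of_mem (hU.mem_nhds h0) hfg).iteratedDeriv_eq,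
    iteratedDeriv_pow_mul_zero ((hg.contDiffOn hU).contDiffAt (hU.mem_nhds h0))]
  exact mul_ne_zero (by exact_mod_cast k.factorial_ne_zero) hg0

theorem add_mul_sub_mem_of_segment_subset {U : Set ℂ} {a w : ℂ} (hseg : segment ℝ a w ⊆ U)
    {t : ℝ} (ht : t ∈ Icc 0 1) : a + t * (w - a) ∈ U :=
  hseg <| by rw [segment_eq_image']; exact ⟨t, ht, by simp [Complex.real_smul]⟩

theorem iteratedDeriv_succ_eq_of_dslope {f : ℂ → ℂ} {U : Set ℂ} (hU : IsOpen U)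
    (hf : DifferentiableOn ℂ f U) {a ζ : ℂ} (ha : a ∈ U) (hζ : ζ ∈ U) (k : ℕ) :
    iteratedDeriv (k + 1) f ζ = (ζ - a) * deriv (iteratedDeriv k (dslope f a)) ζ
      + (k + 1) * iteratedDeriv k (dslope f a) ζ := by
  have hF : ContDiffAt ℂ (k + 1) (dslope f a) ζ :=
    (((Complex.differentiableOn_dslope (hU.mem_nhds ha)).2 hf).contDiffOn hU).contDiffAt
      (hU.mem_nhds hζ)
  have hfeq : f = fun x => f a + (x - a) * dslope f a x := by
    funext x
    rw [← smul_eq_mul, sub_smul_dslope, add_sub_cancel]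
  conv_lhs => rw [hfeq]
  rw [iteratedDeriv_const_add k.succ_pos, iteratedDeriv_succ_sub_mul hF, iteratedDeriv_succ]

theorem iteratedDeriv_dslope_sub_eq_integral {f : ℂ → ℂ} {U : Set ℂ} (hU : IsOpen U)
    (hf : DifferentiableOn ℂ f U) {a w : ℂ} (hseg : segment ℝ a w ⊆ U) (k : ℕ) (c : ℂ) :
    iteratedDeriv k (dslope f a) w - c / (k + 1) =
      ∫ t in (0 : ℝ)..1, (t : ℂ) ^ k * (iteratedDeriv (k + 1) f (a + t * (w - a)) - c) := by
  set u := iteratedDeriv k (dslope f a)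
  have ha : a ∈ U := hseg (left_mem_segment ℝ a w)
  have hγ : ∀ t ∈ Icc (0 : ℝ) 1, a + (t : ℂ) * (w - a) ∈ U := fun t ht =>
    add_mul_sub_mem_of_segment_subset hseg ht
  have hu : DifferentiableOn ℂ u U :=
    ((Complex.differentiableOn_dslope (hU.mem_nhds ha)).2 hf).iteratedDeriv hU k
  -- `f^{(k+1)} = (· - a) u' + (k + 1) u` turns the integrand into an exact derivative.
  have hderiv : ∀ t ∈ uIcc (0 : ℝ) 1,
      HasDerivAt (fun s : ℝ => (s : ℂ) ^ (k + 1) * (u (a + s * (w - a)) - c / (k + 1)))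
        ((t : ℂ) ^ k * (iteratedDeriv (k + 1) f (a + t * (w - a)) - c)) t := by
    intro t ht
    rw [uIcc_of_le zero_le_one] at ht
    have hut := (hu.differentiableAt (hU.mem_nhds (hγ t ht))).hasDerivAt
    have hline : HasDerivAt (fun s : ℂ => a + s * (w - a)) (w - a) t := by
      simpa using ((hasDerivAt_id (t : ℂ)).mul_const (w - a)).const_add a
    have hcomp : HasDerivAt (fun s : ℂ => u (a + s * (w - a)) - c / (k + 1))
        (deriv u (a + t * (w - a)) * (w - a)) t := (hut.comp_of_eq (t : ℂ) hline rfl).sub_const _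
    have := HasDerivAt.comp_ofReal
      (e := fun s : ℂ => s ^ (k + 1) * (u (a + s * (w - a)) - c / (k + 1)))
      ((hasDerivAt_pow (k + 1) (t : ℂ)).mul hcomp)
    convert this using 1
    rw [iteratedDeriv_succ_eq_of_dslope hU hf ha (hγ t ht)]
    field_simp
    push_cast
    ring
  have hcont : ContinuousOn
      (fun t : ℝ => (t : ℂ) ^ k * (iteratedDeriv (k + 1) f (a + t * (w - a)) - c)) (uIcc 0 1) := by
    rw [uIcc_of_le zero_le_one]
    exact (by fun_prop : Continuous fun t : ℝ => (t : ℂ) ^ k).continuousOn.mul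
      (((hf.iteratedDeriv hU (k + 1)).continuousOn.comp (by fun_prop) hγ).sub continuousOn_const)
  rw [intervalIntegral.integral_eq_sub_of_hasDerivAt hderiv hcont.intervalIntegrable]
  simp

theorem norm_iteratedDeriv_dslope_sub_le {f : ℂ → ℂ} {U : Set ℂ} (hU : IsOpen U)
    (hf : DifferentiableOn ℂ f U) {a w : ℂ} (hseg : segment ℝ a w ⊆ U) {k : ℕ} {A : ℂ} {M : ℝ}
    (hM : ∀ z ∈ U, ‖iteratedDeriv (k + 1) f z - A‖ ≤ M) :
    ‖iteratedDeriv k (dslope f a) w - A / (k + 1)‖ ≤ M / (k + 1) := by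
  rw [iteratedDeriv_dslope_sub_eq_integral hU hf hseg k A]
  calc _ ≤ ∫ t in (0 : ℝ)..1, t ^ k * M := by
        refine intervalIntegral.norm_integral_le_of_norm_le zero_le_one
          (Eventually.of_forall fun t ht => ?_) ((by fun_prop : Continuous _).intervalIntegrable _ _)
        have ht' : t ∈ Icc (0 : ℝ) 1 := Ioc_subset_Icc_self ht
        rw [norm_mul, norm_pow, Complex.norm_real, Real.norm_of_nonneg ht'.1]
        exact mul_le_mul_of_nonneg_left (hM _ (add_mul_sub_mem_of_segment_subset hseg ht')) (pow_nonneg ht'.1 k)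
    _ = M / (k + 1) := by
        rw [intervalIntegral.integral_mul_const, integral_pow]
        field_simp
        simp

section IteratedDslope

variable {𝕜 E : Type*} [NontriviallyNormedField 𝕜] [NormedAddCommGroup E] [NormedSpace 𝕜 E]

noncomputable def iteratedDslope : {k : ℕ} → (Fin k → 𝕜) → (𝕜 → E) → 𝕜 → E
  | 0, _, f => f
  | _ + 1, p, f => iteratedDslope (Fin.tail p) (dslope f (p 0))

theorem prod_sub_smul_iteratedDslope {k : ℕ} {p : Fin k → 𝕜} (hp : Function.Injective p)
    {f : 𝕜 → E} (hf : ∀ j, f (p j) = 0) (w : 𝕜) :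
    (∏ j, (w - p j)) • iteratedDslope p f w = f w := by
  induction k generalizing f with
  | zero => simp [iteratedDslope]
  | succ k ih =>
    have hslope : ∀ j, dslope f (p 0) (Fin.tail p j) = 0 := fun j => by
      rw [Fin.tail, dslope_of_ne _ (hp.ne (Fin.succ_ne_zero j)), slope_def_module, hf, hf, sub_zero,
        smul_zero]
    have htail : Function.Injective (Fin.tail p) := hp.comp (Fin.succ_injective _)
    rw [iteratedDslope, Fin.prod_univ_succ, mul_smul]
    exact (congrArg _ (ih htail hslope)).trans (sub_smul_dslope_of_zero (hf 0) w)

end IteratedDslope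

theorem DifferentiableOn.iteratedDslope {E : Type*} [NormedAddCommGroup E] [NormedSpace ℂ E]
    [CompleteSpace E] {U : Set ℂ} (hU : IsOpen U) {k : ℕ} {p : Fin k → ℂ} (hp : ∀ j, p j ∈ U)
    {f : ℂ → E} (hf : DifferentiableOn ℂ f U) : DifferentiableOn ℂ (iteratedDslope p f) U := by
  induction k generalizing f with
  | zero => exact hf
  | succ k ih =>
    exact ih (fun j => hp j.succ) ((Complex.differentiableOn_dslope (hU.mem_nhds (hp 0))).2 hf)

theorem norm_iteratedDslope_sub_le {U : Set ℂ} (hU : IsOpen U) (hUc : Convex ℝ U) {k : ℕ}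
    {p : Fin k → ℂ} (hp : ∀ j, p j ∈ U) {f : ℂ → ℂ} (hf : DifferentiableOn ℂ f U) {A : ℂ} {M : ℝ}
    (hM : ∀ z ∈ U, ‖iteratedDeriv k f z - A‖ ≤ M) {w : ℂ} (hw : w ∈ U) :
    ‖iteratedDslope p f w - A / (k ! : ℂ)‖ ≤ M / k ! := by
  induction k generalizing f A M with
  | zero => simpa [iteratedDslope] using hM w hw
  | succ k ih =>
    have hslope : ∀ z ∈ U, ‖iteratedDeriv k (dslope f (p 0)) z - A / (k + 1)‖ ≤ M / (k + 1) :=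
      fun z hz => norm_iteratedDeriv_dslope_sub_le hU hf (hUc.segment_subset (hp 0) hz) hM
    have := ih (fun j => hp j.succ) ((Complex.differentiableOn_dslope (hU.mem_nhds (hp 0))).2 hf)
      hslope
    rw [iteratedDslope, Nat.factorial_succ, Nat.cast_mul, Nat.cast_mul, ← div_div, ← div_div]
    exact_mod_cast this

theorem exists_eq_mul_prod_sub_of_norm_iteratedDeriv_sub_le {U : Set ℂ} (hU : IsOpen U)
    (hUc : Convex ℝ U) {k : ℕ} {p : Fin k → ℂ} (hp : ∀ j, p j ∈ U) (hinj : Function.Injective p)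
    {f : ℂ → ℂ} (hf : DifferentiableOn ℂ f U) (hfp : ∀ j, f (p j) = 0) {A : ℂ} {M : ℝ}
    (hM : ∀ z ∈ U, ‖iteratedDeriv k f z - A‖ ≤ M) (hMA : M < ‖A‖) :
    ∃ g : ℂ → ℂ, DifferentiableOn ℂ g U ∧ (∀ w ∈ U, g w ≠ 0) ∧
      ∀ w, f w = g w * ∏ j, (w - p j) := by
  refine ⟨iteratedDslope p f, hf.iteratedDslope hU hp, fun w hw hzero => ?_, fun w => ?_⟩
  · have hbound := norm_iteratedDslope_sub_le hU hUc hp hf hM hw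
    rw [hzero, zero_sub, norm_neg, norm_div, Complex.norm_natCast] at hbound
    exact hMA.not_ge ((div_le_div_iff_of_pos_right (by positivity)).1 hbound)
  · rw [← prod_sub_smul_iteratedDslope hinj hfp w, smul_eq_mul, mul_comm]

theorem isOpen_setOf_norm_lt_and_im_lt (δ c : ℝ) : IsOpen {w : ℂ | ‖w‖ < δ ∧ w.im < c} :=
  (isOpen_lt continuous_norm continuous_const).inter
    (isOpen_lt Complex.continuous_im continuous_const)

theorem convex_setOf_norm_lt_and_im_lt (δ c : ℝ) : Convex ℝ {w : ℂ | ‖w‖ < δ ∧ w.im < c} := by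
  have hset : {w : ℂ | ‖w‖ < δ ∧ w.im < c} = ball 0 δ ∩ {w | w.im < c} := by ext; simp
  exact hset ▸ (convex_ball 0 δ).inter (convex_halfSpace_im_lt c)

theorem mem_setOf_norm_lt_and_im_lt_of_norm_lt {δ c : ℝ} {w : ℂ} (hw : ‖w‖ < c) (hcδ : c ≤ δ) :
    w ∈ {w : ℂ | ‖w‖ < δ ∧ w.im < c} :=
  ⟨hw.trans_le hcδ, (Complex.im_le_norm w).trans_lt hw⟩

theorem Fin.injective_of_two_le_imp_ne {α : Type*} {k : ℕ} {p : Fin k → α}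
    (h : 2 ≤ k → ∀ i j, i ≠ j → p i ≠ p j) : Function.Injective p := by
  intro i j hij
  by_contra hne
  rcases lt_or_ge k 2 with hk | hk
  · exact hne (Fin.ext (by omega))
  · exact h hk i j hne hij

theorem statement16_general (δ₀ b₀ I₀ : ℝ) (hδ₀ : 0 < δ₀) (hI₀ : 0 < I₀)
    (k₀ : ℕ) (f₀ g₀ : ℂ → ℂ) (f : ℝ → ℂ → ℂ) (z : Fin k₀ → ℝ → ℂ)
    (hf₀ : DifferentiableOn ℂ f₀ (ball 0 δ₀))
    (hg₀diff : DifferentiableOn ℂ g₀ (ball 0 δ₀))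
    (hg₀ne : ∀ w ∈ ball (0 : ℂ) δ₀, g₀ w ≠ 0)
    (hfactor : ∀ w ∈ ball (0 : ℂ) δ₀, f₀ w = w ^ k₀ * g₀ w)
    (hfb : ∀ b ∈ Ioc (0 : ℝ) b₀, DifferentiableOn ℂ (f b)
      {w : ℂ | ‖w‖ < δ₀ ∧ w.im < I₀ * b})
    (hconv : ∀ ε > (0 : ℝ), ∃ b' ∈ Ioc (0 : ℝ) b₀, ∀ b ∈ Ioc (0 : ℝ) b', ∀ n ≤ k₀ + 1,
      ∀ w ∈ {w : ℂ | ‖w‖ < δ₀ ∧ w.im < I₀ * b},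
        ‖iteratedDeriv n (f b) w - iteratedDeriv n f₀ w‖ ≤ ε)
    (hzsmall : ∀ j, ∀ b ∈ Ioc (0 : ℝ) b₀, ‖z j b‖ ≤ I₀ * b / 3)
    (hzzero : ∀ j, ∀ b ∈ Ioc (0 : ℝ) b₀, f b (z j b) = 0)
    (hzdist : 2 ≤ k₀ → ∀ b ∈ Ioc (0 : ℝ) b₀,
      ∀ j j' : Fin k₀, j ≠ j' → z j b ≠ z j' b) :
    ∃ δ₁ ∈ Ioc (0 : ℝ) δ₀, ∃ b₁ ∈ Ioc (0 : ℝ) b₀, ∀ b ∈ Ioc (0 : ℝ) b₁,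
      ∃ g : ℂ → ℂ,
        DifferentiableOn ℂ g {w : ℂ | ‖w‖ < δ₁ ∧ w.im < I₀ * b} ∧
        (∀ w ∈ {w : ℂ | ‖w‖ < δ₁ ∧ w.im < I₀ * b}, g w ≠ 0) ∧
        (∀ w ∈ {w : ℂ | ‖w‖ < δ₁ ∧ w.im < I₀ * b},
          f b w = g w * ∏ j : Fin k₀, (w - z j b)) := by
  have h0 : (0 : ℂ) ∈ ball (0 : ℂ) δ₀ := mem_ball_self hδ₀
  have hA : iteratedDeriv k₀ f₀ 0 ≠ 0 :=
    iteratedDeriv_ne_zero_of_eqOn_pow_mul isOpen_ball h0 hg₀diff (hg₀ne 0 h0) hfactor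
  set A := iteratedDeriv k₀ f₀ 0
  have hε : 0 < ‖A‖ / 4 := by positivity
  obtain ⟨δ', hδ', hf₀A⟩ := Metric.continuousAt_iff.1
    ((hf₀.iteratedDeriv isOpen_ball k₀).continuousOn.continuousAt (isOpen_ball.mem_nhds h0)) _ hε
  obtain ⟨b', hb', hfbf₀⟩ := hconv _ hε
  set δ₁ := min δ' δ₀
  have hδ₁ : 0 < δ₁ := lt_min hδ' hδ₀
  refine ⟨δ₁, ⟨hδ₁, min_le_right _ _⟩, min b' (δ₁ / I₀),
    ⟨lt_min hb'.1 (div_pos hδ₁ hI₀), (min_le_left _ _).trans hb'.2⟩, fun b hb => ?_⟩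
  have hbb' : b ∈ Ioc 0 b' := ⟨hb.1, hb.2.trans (min_le_left _ _)⟩
  have hbb₀ : b ∈ Ioc 0 b₀ := ⟨hb.1, hbb'.2.trans hb'.2⟩
  have hIb : I₀ * b ≤ δ₁ := (le_div_iff₀' hI₀).1 (hb.2.trans (min_le_right _ _))
  set U := {w : ℂ | ‖w‖ < δ₁ ∧ w.im < I₀ * b}
  have hUsub : U ⊆ {w : ℂ | ‖w‖ < δ₀ ∧ w.im < I₀ * b} :=
    fun w hw => ⟨hw.1.trans_le (min_le_right _ _), hw.2⟩
  have hzU : ∀ j, z j b ∈ U := fun j => mem_setOf_norm_lt_and_im_lt_of_norm_lt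
    (by linarith [hzsmall j b hbb₀, mul_pos hI₀ hb.1]) hIb
  have hderiv : ∀ w ∈ U, ‖iteratedDeriv k₀ (f b) w - A‖ ≤ ‖A‖ / 2 := fun w hw => by
    have h1 := hfbf₀ b hbb' k₀ k₀.le_succ w (hUsub hw)
    have h2 := (hf₀A (by simpa using hw.1.trans_le (min_le_left _ _))).le
    rw [dist_eq_norm] at h2
    calc _ ≤ ‖iteratedDeriv k₀ (f b) w - iteratedDeriv k₀ f₀ w‖ + ‖iteratedDeriv k₀ f₀ w - A‖ :=
          norm_sub_le_norm_sub_add_norm_sub _ _ _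
      _ ≤ ‖A‖ / 2 := by linarith
  obtain ⟨g, hg, hg0, hfg⟩ := exists_eq_mul_prod_sub_of_norm_iteratedDeriv_sub_le
    (isOpen_setOf_norm_lt_and_im_lt _ _) (convex_setOf_norm_lt_and_im_lt _ _) hzU
    (Fin.injective_of_two_le_imp_ne fun hk => hzdist hk b hbb₀)
    ((hfb b hbb₀).mono hUsub) (fun j => hzzero j b hbb₀) hderiv (by linarith [norm_pos_iff.2 hA])
  exact ⟨g, hg, hg0, fun w _ => hfg w⟩

/-- Uniqueness of zeros for a degenerate bifurcation of analytic functions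
(substitute for Rouché's theorem on the shrinking regions
`Ω_b = {|z| < δ₀, Im z < I₀ b}`):  if `f₀ = z^{k₀} g₀` with `g₀` analytic and
nonvanishing on `B_{δ₀}(0)`, the family `f_b` is analytic on `Ω_b`, uniformly
bounded in `C^{k₀+1}` and converging to `f₀` in `C^{k₀+1}` as `b → 0`, and `f_b`
has `k₀` zeros `z_j(b)` with `z_j(0) = 0`, `|z_j(b)| ≤ I₀b/3`, pairwise distinct and
`b`-equidistributed except possibly the pair `(1,2)`, then for some `δ₁ ≤ δ₀`,
`b₁ ≤ b₀` and each `0 < b ≤ b₁`, `g_b = f_b/∏_j(z−z_j(b))` is analytic and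
nonvanishing on `{|z| < δ₁, Im z < I₀ b}`. -/
theorem statement16 (δ₀ b₀ I₀ : ℝ) (hδ₀ : 0 < δ₀) (hb₀ : 0 < b₀) (hI₀ : 0 < I₀)
    (k₀ : ℕ) (f₀ g₀ : ℂ → ℂ) (f : ℝ → ℂ → ℂ) (z : Fin k₀ → ℝ → ℂ)
    (hf₀ : DifferentiableOn ℂ f₀ (ball 0 δ₀))
    (hg₀diff : DifferentiableOn ℂ g₀ (ball 0 δ₀))
    (hg₀ne : ∀ w ∈ ball (0 : ℂ) δ₀, g₀ w ≠ 0)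
    (hfactor : ∀ w ∈ ball (0 : ℂ) δ₀, f₀ w = w ^ k₀ * g₀ w)
    (hfb : ∀ b ∈ Ioc (0 : ℝ) b₀, DifferentiableOn ℂ (f b)
      {w : ℂ | ‖w‖ < δ₀ ∧ w.im < I₀ * b})
    (hbdd : ∃ C : ℝ, ∀ b ∈ Ioc (0 : ℝ) b₀, ∀ n ≤ k₀ + 1,
      ∀ w ∈ {w : ℂ | ‖w‖ < δ₀ ∧ w.im < I₀ * b},
        ‖iteratedDeriv n (f b) w‖ ≤ C)
    (hconv : ∀ ε > (0 : ℝ), ∃ b' ∈ Ioc (0 : ℝ) b₀, ∀ b ∈ Ioc (0 : ℝ) b', ∀ n ≤ k₀ + 1,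
      ∀ w ∈ {w : ℂ | ‖w‖ < δ₀ ∧ w.im < I₀ * b},
        ‖iteratedDeriv n (f b) w - iteratedDeriv n f₀ w‖ ≤ ε)
    (hz0 : ∀ j, z j 0 = 0)
    (hzsmall : ∀ j, ∀ b ∈ Ioc (0 : ℝ) b₀, ‖z j b‖ ≤ I₀ * b / 3)
    (hzzero : ∀ j, ∀ b ∈ Ioc (0 : ℝ) b₀, f b (z j b) = 0)
    (hzdist : 2 ≤ k₀ → ∀ b ∈ Ioc (0 : ℝ) b₀,
      ∀ j j' : Fin k₀, j ≠ j' → z j b ≠ z j' b)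
    (hzequi : 2 ≤ k₀ → ∃ Cstar : ℝ, 1 < Cstar ∧ ∀ b ∈ Ioc (0 : ℝ) b₀,
      ∀ j j' : Fin k₀, j < j' → ¬((j : ℕ) = 0 ∧ (j' : ℕ) = 1) →
        Cstar⁻¹ * b ≤ ‖z j b - z j' b‖ ∧
        ‖z j b - z j' b‖ ≤ Cstar * b) :
    ∃ δ₁ ∈ Ioc (0 : ℝ) δ₀, ∃ b₁ ∈ Ioc (0 : ℝ) b₀, ∀ b ∈ Ioc (0 : ℝ) b₁,
      ∃ g : ℂ → ℂ,
        DifferentiableOn ℂ g {w : ℂ | ‖w‖ < δ₁ ∧ w.im < I₀ * b} ∧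
        (∀ w ∈ {w : ℂ | ‖w‖ < δ₁ ∧ w.im < I₀ * b}, g w ≠ 0) ∧
        (∀ w ∈ {w : ℂ | ‖w‖ < δ₁ ∧ w.im < I₀ * b},
          f b w = g w * ∏ j : Fin k₀, (w - z j b)) :=
  statement16_general δ₀ b₀ I₀ hδ₀ hI₀ k₀ f₀ g₀ f z hf₀ hg₀diff hg₀ne hfactor hfb hconv hzsmall
    hzzero hzdist
end

section
/- Let F : [1,∞) → ℝ be continuous with |F(r)| ≤ C r^{−2} e^{−r} for all r ≥ 1, and let u ∈ C²([1,∞)) be bounded, solve u″ = u + F on [1,∞), and satisfy u(r) → 0 as r → ∞. Then there exists κ ∈ ℝ and C′ > 0 such that |u(r) − κ e^{−r}| ≤ C′ r^{−1} e^{−r} for all r ≥ 1. -/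
/-!
Since `u'' - u = (D - 1)(D + 1) u`, the function `g = e^{-r} (u' + u)` satisfies `g' = e^{-r} F`,
whose tail integral from `r` is at most `C e^{-2r} / r²`. Hence `g` has a limit `L`, and `L = 0`,
since otherwise `u' = e^r g - u` would tend to `±∞`, contradicting the boundedness of `u`.
Integrating back from infinity gives `|u' + u| ≤ C e^{-r} / r²`. Then `h = e^r u` has
`|h'| = e^r |u' + u| ≤ C / r²`, so `h` tends to some `κ` with `|κ - h r| ≤ C / r`.
-/

open Set Filter Topology MeasureTheory Real

theorem ContDiffOn.hasDerivWithinAt_iteratedDerivWithin_two {𝕜 E : Type*}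
    [NontriviallyNormedField 𝕜] [NormedAddCommGroup E] [NormedSpace 𝕜 E] {u : 𝕜 → E}
    {s : Set 𝕜} {x : 𝕜} (hu : ContDiffOn 𝕜 2 u s) (hs : UniqueDiffOn 𝕜 s)
    (hx : x ∈ s) :
    HasDerivWithinAt (derivWithin u s) (iteratedDerivWithin 2 u s x) s x := by
  rw [iteratedDerivWithin_succ, iteratedDerivWithin_one]
  exact ((hu.derivWithin hs (m := 1) (by norm_num)).differentiableOn one_ne_zero x
    hx).hasDerivWithinAt

section TailIntegral

variable {ψ d b : ℝ → ℝ} {a m : ℝ}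

theorem integrableOn_Ioi_of_hasDerivAt_of_abs_le (hψ : ∀ x ∈ Ioi a, HasDerivAt ψ (d x) x)
    (hb : IntegrableOn b (Ioi a)) (hdb : ∀ x ∈ Ioi a, |d x| ≤ b x) : IntegrableOn d (Ioi a) :=
  hb.mono' ((measurable_deriv ψ).aestronglyMeasurable.congr <|
      (ae_restrict_mem measurableSet_Ioi).mono fun x hx => (hψ x hx).deriv)
    ((ae_restrict_mem measurableSet_Ioi).mono hdb)

theorem abs_sub_le_integral_Ioi_of_hasDerivWithinAt
    (hψ : ∀ x ∈ Ici a, HasDerivWithinAt ψ (d x) (Ici a) x) (hlim : Tendsto ψ atTop (𝓝 m))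
    {r : ℝ} (hr : a ≤ r) (hb : IntegrableOn b (Ioi r)) (hdb : ∀ x ∈ Ioi r, |d x| ≤ b x) :
    |m - ψ r| ≤ ∫ x in Ioi r, b x := by
  have hψ' : ∀ x ∈ Ioi r, HasDerivAt ψ (d x) x := fun x hx =>
    (hψ x (hr.trans hx.le)).hasDerivAt (Ici_mem_nhds (hr.trans_lt hx))
  rw [← integral_Ioi_of_hasDerivAt_of_tendsto
    ((hψ r hr).continuousWithinAt.mono (Ici_subset_Ici.2 hr)) hψ'
    (integrableOn_Ioi_of_hasDerivAt_of_abs_le hψ' hb hdb) hlim]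
  exact norm_integral_le_of_norm_le (f := d) hb
    ((ae_restrict_mem measurableSet_Ioi).mono hdb)

theorem tendsto_limUnder_of_hasDerivWithinAt_of_abs_le
    (hψ : ∀ x ∈ Ici a, HasDerivWithinAt ψ (d x) (Ici a) x) (hb : IntegrableOn b (Ioi a))
    (hdb : ∀ x ∈ Ioi a, |d x| ≤ b x) : Tendsto ψ atTop (𝓝 (limUnder atTop ψ)) := by
  have hψ' : ∀ x ∈ Ioi a, HasDerivAt ψ (d x) x := fun x hx =>
    (hψ x (Ioi_subset_Ici_self hx)).hasDerivAt (Ici_mem_nhds hx)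
  exact tendsto_limUnder_of_hasDerivAt_of_integrableOn_Ioi hψ'
    (integrableOn_Ioi_of_hasDerivAt_of_abs_le hψ' hb hdb)

end TailIntegral

theorem tendsto_atTop_of_tendsto_deriv_atTop {f f' : ℝ → ℝ}
    (hf : ∀ᶠ x in atTop, HasDerivAt f (f' x) x) (hf' : Tendsto f' atTop atTop) :
    Tendsto f atTop atTop := by
  obtain ⟨b, hb⟩ := eventually_atTop.1 (hf.and (hf'.eventually_ge_atTop 1))
  have hmono : MonotoneOn (fun y => f y - y) (Ici b) := by
    refine monotoneOn_of_hasDerivWithinAt_nonneg (f' := fun y => f' y - 1) (convex_Ici b) ?_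
      (fun x hx => ((hb x (interior_subset hx)).1.sub (hasDerivAt_id x)).hasDerivWithinAt)
      (fun x hx => sub_nonneg.2 (hb x (interior_subset hx)).2)
    exact fun x hx => ((hb x hx).1.sub (hasDerivAt_id x)).continuousAt.continuousWithinAt
  refine tendsto_atTop_mono' _ ?_ (tendsto_atTop_add_const_right _ (f b - b) tendsto_id)
  filter_upwards [eventually_ge_atTop b] with y hy
  have := hmono self_mem_Ici hy hy
  simp only [id] at this ⊢
  linarith

theorem eq_zero_of_tendsto_exp_neg_mul_deriv_add {u u' : ℝ → ℝ} {L M : ℝ}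
    (hu : ∀ᶠ x in atTop, HasDerivAt u (u' x) x) (hM : ∀ᶠ x in atTop, |u x| ≤ M)
    (hL : Tendsto (fun x => exp (-x) * (u' x + u x)) atTop (𝓝 L)) : L = 0 := by
  have exp_mul_exp_neg : ∀ x y : ℝ, exp x * (exp (-x) * y) = y := fun x y => by
    rw [← mul_assoc, ← exp_add, add_neg_cancel, exp_zero, one_mul]
  have unbounded (w : ℝ → ℝ) (hw : Tendsto w atTop atTop) :
      ¬ ∀ᶠ x in atTop, |w x| ≤ M := by
    intro hwM
    obtain ⟨x, hx, hxM⟩ := ((hw.eventually_gt_atTop M).and hwM).exists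
    linarith [le_abs_self (w x)]
  rcases lt_trichotomy L 0 with hneg | hzero | hpos
  · have h : Tendsto (fun x => -u' x) atTop atTop := by
      refine (tendsto_atTop_add_right_of_le' _ (-M) (g := u)
        (tendsto_exp_atTop.atTop_mul_pos (neg_pos.2 hneg) hL.neg) ?_).congr fun x => ?_
      · exact hM.mono fun x hx => (abs_le.1 hx).1
      · simp only [mul_neg, exp_mul_exp_neg]; ring
    exact (unbounded _ (tendsto_atTop_of_tendsto_deriv_atTop (hu.mono fun x hx => hx.neg) h)
      (by simpa using hM)).elim
  · exact hzero
  · have h : Tendsto u' atTop atTop := by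
      refine (tendsto_atTop_add_right_of_le' _ (-M) (g := fun x => -u x)
        (tendsto_exp_atTop.atTop_mul_pos hpos hL) ?_).congr fun x => ?_
      · exact hM.mono fun x hx => neg_le_neg (abs_le.1 hx).2
      · simp only [exp_mul_exp_neg]; ring
    exact (unbounded _ (tendsto_atTop_of_tendsto_deriv_atTop hu h) hM).elim

theorem HasDerivWithinAt.exp_neg_mul_add {u v : ℝ → ℝ} {s : Set ℝ} {x w : ℝ}
    (hu : HasDerivWithinAt u (v x) s x) (hv : HasDerivWithinAt v (u x + w) s x) :
    HasDerivWithinAt (fun y => Real.exp (-y) * (v y + u y)) (Real.exp (-x) * w) s x :=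
  ((hasDerivWithinAt_id x s).neg.exp.mul (hv.add hu)).congr_deriv (by simp; ring)

theorem abs_exp_neg_mul_le_of_abs_le {F : ℝ → ℝ} {a C r x : ℝ} (ha : 0 < a)
    (hF : ∀ y ∈ Ici a, |F y| ≤ C * exp (-y) / y ^ 2) (hr : a ≤ r) (hx : r ≤ x) :
    |exp (-x) * F x| ≤ C * exp (-r) / r ^ 2 * exp (-x) := by
  have hC : 0 ≤ C := by
    have := (abs_nonneg _).trans (hF a self_mem_Ici)
    rw [mul_div_assoc] at this
    exact nonneg_of_mul_nonneg_left this (by positivity)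
  have hr0 : 0 < r := ha.trans_le hr
  calc |exp (-x) * F x| = |F x| * exp (-x) := by
        rw [abs_mul, abs_of_pos (exp_pos _), mul_comm]
    _ ≤ C * exp (-x) / x ^ 2 * exp (-x) := by gcongr; exact hF x (hr.trans hx)
    _ ≤ C * exp (-r) / r ^ 2 * exp (-x) := by gcongr

section SecondOrderODE

variable {u v F : ℝ → ℝ} {a C M : ℝ}

theorem abs_deriv_add_le_of_bounded_solution (ha : 0 < a)
    (hu : ∀ x ∈ Ici a, HasDerivWithinAt u (v x) (Ici a) x)
    (hv : ∀ x ∈ Ici a, HasDerivWithinAt v (u x + F x) (Ici a) x)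
    (hF : ∀ x ∈ Ici a, |F x| ≤ C * exp (-x) / x ^ 2) (hM : ∀ x ∈ Ici a, |u x| ≤ M) :
    ∀ r ∈ Ici a, |v r + u r| ≤ C * exp (-r) / r ^ 2 := by
  set g : ℝ → ℝ := fun y => exp (-y) * (v y + u y)
  have hg : ∀ x ∈ Ici a, HasDerivWithinAt g (exp (-x) * F x) (Ici a) x := fun x hx =>
    (hu x hx).exp_neg_mul_add (hv x hx)
  have hint (r : ℝ) : IntegrableOn (fun x => C * exp (-r) / r ^ 2 * exp (-x)) (Ioi r) :=
    (integrableOn_exp_neg_Ioi r).const_mul _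
  have hbound {r : ℝ} (hr : a ≤ r) (x : ℝ) (hx : x ∈ Ioi r) :
      |exp (-x) * F x| ≤ C * exp (-r) / r ^ 2 * exp (-x) :=
    abs_exp_neg_mul_le_of_abs_le ha hF hr (le_of_lt hx)
  have hlim := tendsto_limUnder_of_hasDerivWithinAt_of_abs_le hg (hint a) (hbound le_rfl)
  have hzero : limUnder atTop g = 0 :=
    eq_zero_of_tendsto_exp_neg_mul_deriv_add
      ((eventually_gt_atTop a).mono fun x hx => (hu x hx.le).hasDerivAt (Ici_mem_nhds hx))
      ((eventually_ge_atTop a).mono hM) hlim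
  intro r hr
  have key := abs_sub_le_integral_Ioi_of_hasDerivWithinAt hg hlim hr (hint r) (hbound hr)
  rw [hzero, zero_sub, abs_neg, integral_const_mul, integral_exp_neg_Ioi, abs_mul,
    abs_of_pos (exp_pos _), mul_comm] at key
  exact le_of_mul_le_mul_right key (exp_pos _)

theorem exists_abs_sub_exp_mul_le (ha : 0 < a)
    (hu : ∀ x ∈ Ici a, HasDerivWithinAt u (v x) (Ici a) x)
    (hvu : ∀ x ∈ Ici a, |v x + u x| ≤ C * exp (-x) / x ^ 2) :
    ∃ κ, ∀ r ∈ Ici a, |κ - exp r * u r| ≤ C / r := by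
  have hh (x : ℝ) (hx : x ∈ Ici a) :
      HasDerivWithinAt (fun y => exp y * u y) (exp x * (v x + u x)) (Ici a) x :=
    ((hasDerivWithinAt_id x _).exp.mul (hu x hx)).congr_deriv (by simp; ring)
  have hint {r : ℝ} (hr : a ≤ r) : IntegrableOn (fun x => C * x ^ (-2 : ℝ)) (Ioi r) :=
    (integrableOn_Ioi_rpow_of_lt (by norm_num) (ha.trans_le hr)).const_mul C
  have hbound {r : ℝ} (hr : a ≤ r) (x : ℝ) (hx : x ∈ Ioi r) :
      |exp x * (v x + u x)| ≤ C * x ^ (-2 : ℝ) := by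
    have hx0 : 0 < x := ha.trans_le (hr.trans (le_of_lt hx))
    calc |exp x * (v x + u x)| = exp x * |v x + u x| := by rw [abs_mul, abs_of_pos (exp_pos _)]
      _ ≤ exp x * (C * exp (-x) / x ^ 2) := by gcongr; exact hvu x (hr.trans (le_of_lt hx))
      _ = C * x ^ (-2 : ℝ) := by
        rw [rpow_neg hx0.le, rpow_two, exp_neg]; field_simp
  refine ⟨limUnder atTop fun y => exp y * u y, fun r hr => ?_⟩
  have key := abs_sub_le_integral_Ioi_of_hasDerivWithinAt hh
    (tendsto_limUnder_of_hasDerivWithinAt_of_abs_le hh (hint le_rfl) (hbound le_rfl)) hr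
    (hint hr) (hbound hr)
  rwa [integral_const_mul, integral_Ioi_rpow_of_lt (by norm_num) (ha.trans_le hr),
    show (-2 : ℝ) + 1 = -1 by norm_num, rpow_neg_one, neg_div_neg_eq, div_one, ← div_eq_mul_inv]
    at key

end SecondOrderODE

theorem statement19_general (C : ℝ) (F u : ℝ → ℝ)
    (hFbound : ∀ r ∈ Ici (1 : ℝ), |F r| ≤ C * Real.exp (-r) / r ^ 2)
    (hu : ContDiffOn ℝ 2 u (Ici 1))
    (hbdd : ∃ M : ℝ, ∀ r ∈ Ici (1 : ℝ), |u r| ≤ M)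
    (heq : ∀ r ∈ Ici (1 : ℝ), iteratedDerivWithin 2 u (Ici 1) r = u r + F r) :
    ∃ κ : ℝ, ∃ C' : ℝ, 0 < C' ∧ ∀ r ∈ Ici (1 : ℝ),
      |u r - κ * Real.exp (-r)| ≤ C' * Real.exp (-r) / r := by
  obtain ⟨M, hM⟩ := hbdd
  have hu' (x : ℝ) (hx : x ∈ Ici 1) :
      HasDerivWithinAt u (derivWithin u (Ici 1) x) (Ici 1) x :=
    (hu.differentiableOn (by norm_num) x hx).hasDerivWithinAt
  have hv' (x : ℝ) (hx : x ∈ Ici 1) :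
      HasDerivWithinAt (derivWithin u (Ici 1)) (u x + F x) (Ici 1) x :=
    heq x hx ▸ hu.hasDerivWithinAt_iteratedDerivWithin_two (uniqueDiffOn_Ici 1) hx
  obtain ⟨κ, hκ⟩ := exists_abs_sub_exp_mul_le one_pos hu'
    (abs_deriv_add_le_of_bounded_solution one_pos hu' hv' hFbound hM)
  refine ⟨κ, |C| + 1, by positivity, fun r hr => ?_⟩
  have hr0 : 0 < r := one_pos.trans_le hr
  have hsplit : u r - κ * exp (-r) = -((κ - exp r * u r) * exp (-r)) := by
    rw [exp_neg]; field_simp; ring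
  calc |u r - κ * exp (-r)| = |κ - exp r * u r| * exp (-r) := by
        rw [hsplit, abs_neg, abs_mul, abs_of_pos (exp_pos _)]
    _ ≤ C / r * exp (-r) := by gcongr; exact hκ r hr
    _ ≤ (|C| + 1) * exp (-r) / r := by
        rw [div_mul_eq_mul_div]
        gcongr
        linarith [le_abs_self C]

/-- Sharp exponential asymptotics from the ODE `u″ = u + F`: if `F` is continuous on
`[1,∞)` with `|F(r)| ≤ C r⁻² e^{−r}`, and `u ∈ C²([1,∞))` is bounded, solves
`u″ = u + F` on `[1,∞)` and tends to `0` at infinity, then there are `κ ∈ ℝ` and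
`C′ > 0` with `|u(r) − κ e^{−r}| ≤ C′ r⁻¹ e^{−r}` for all `r ≥ 1`. -/
theorem statement19 (C : ℝ) (F u : ℝ → ℝ)
    (hF : ContinuousOn F (Ici 1))
    (hFbound : ∀ r ∈ Ici (1 : ℝ), |F r| ≤ C * Real.exp (-r) / r ^ 2)
    (hu : ContDiffOn ℝ 2 u (Ici 1))
    (hbdd : ∃ M : ℝ, ∀ r ∈ Ici (1 : ℝ), |u r| ≤ M)
    (heq : ∀ r ∈ Ici (1 : ℝ), iteratedDerivWithin 2 u (Ici 1) r = u r + F r)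
    (hlim : Filter.Tendsto u Filter.atTop (nhds 0)) :
    ∃ κ : ℝ, ∃ C' : ℝ, 0 < C' ∧ ∀ r ∈ Ici (1 : ℝ),
      |u r - κ * Real.exp (-r)| ≤ C' * Real.exp (-r) / r :=
  statement19_general C F u hFbound hu hbdd heq
end
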